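/- arXiv:2310.04515 — 6 statements merged into one kernel-verified Lean document; each statement's English description precedes it below -/
import Mathlib

section
/- Let H be a real Hilbert space, E ≥ 1 an integer, G ≥ 0, and let τ ≤ t be natural numbers with t − τ ≤ E − 1. Let η : ℕ → ℝ be positive and nonincreasing with η_τ ≤ 2·η_t. Let ι be a finite index set with weights q_k ≥ 0 and ∑_{k∈ι} q_k = 1. Fix w_τ ∈ H, and suppose for each k ∈ ι and each i with τ ≤ i ≤ t−1 there are vectors g_i^k ∈ H with ‖g_i^k‖ ≤ G; set w^k = w_τ − ∑_{i=τ}^{t−1} η_i g_i^k and w̄ = ∑_{k∈ι} q_k w^k. Then ∑_{k∈ι} q_k ‖w^k − w̄‖² ≤ 4 η_t² (E−1)² G². -/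
/-!
Every local iterate lies within `B = 2 η_t (E - 1) G` of the common start `w_τ`: it moves by
at most `t - τ ≤ E - 1` steps, each of length `η_i ‖g_i‖ ≤ η_τ G ≤ 2 η_t G`. The weighted mean
`w̄` minimises the weighted spread `c ↦ ∑ q_k ‖w^k - c‖²` (the parallel-axis identity), so the
spread around `w̄` is at most the spread around `w_τ`, which is at most `B²`.
-/

open Finset
open scoped RealInnerProductSpace

section WeightedSpread

variable {H : Type*} [NormedAddCommGroup H] [InnerProductSpace ℝ H] {ι : Type*} [Fintype ι]

theorem sum_smul_sub_weighted_mean (q : ι → ℝ) (hsum : ∑ k, q k = 1) (x : ι → H) :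
    ∑ k, q k • (x k - ∑ j, q j • x j) = 0 := by
  simp only [smul_sub, sum_sub_distrib, ← sum_smul, hsum, one_smul, sub_self]

theorem sum_mul_norm_sub_sq_eq (q : ι → ℝ) (hsum : ∑ k, q k = 1) (x : ι → H) (c : H) :
    ∑ k, q k * ‖x k - c‖ ^ 2 =
      ∑ k, q k * ‖x k - ∑ j, q j • x j‖ ^ 2 + ‖∑ j, q j • x j - c‖ ^ 2 := by
  have hmean := sum_smul_sub_weighted_mean q hsum x
  set m := ∑ j, q j • x j
  have hcross : ∑ k, q k * ⟪x k - m, m - c⟫ = 0 := by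
    simp only [← real_inner_smul_left, ← sum_inner, hmean, inner_zero_left]
  calc ∑ k, q k * ‖x k - c‖ ^ 2
      = ∑ k, (q k * ‖x k - m‖ ^ 2 + 2 * (q k * ⟪x k - m, m - c⟫) + q k * ‖m - c‖ ^ 2) := by
        refine sum_congr rfl fun k _ => ?_
        rw [← sub_add_sub_cancel (x k) m c, norm_add_sq_real]
        ring
    _ = ∑ k, q k * ‖x k - m‖ ^ 2 + ‖m - c‖ ^ 2 := by
        rw [sum_add_distrib, sum_add_distrib, ← mul_sum, hcross, ← sum_mul, hsum]
        ring

theorem sum_mul_norm_sub_weighted_mean_sq_le_sq (q : ι → ℝ) (hq : ∀ k, 0 ≤ q k)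
    (hsum : ∑ k, q k = 1) (x : ι → H) (c : H) {B : ℝ} (hB : ∀ k, ‖x k - c‖ ≤ B) :
    ∑ k, q k * ‖x k - ∑ j, q j • x j‖ ^ 2 ≤ B ^ 2 :=
  calc ∑ k, q k * ‖x k - ∑ j, q j • x j‖ ^ 2
      ≤ ∑ k, q k * ‖x k - c‖ ^ 2 := by
        rw [sum_mul_norm_sub_sq_eq q hsum x c]
        exact le_add_of_nonneg_right (sq_nonneg _)
    _ ≤ ∑ k, q k * B ^ 2 := by
        gcongr with k
        · exact hq k
        · exact hB k
    _ = B ^ 2 := by rw [← sum_mul, hsum, one_mul]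

end WeightedSpread

theorem norm_sum_smul_le_card_mul {E : Type*} [SeminormedAddCommGroup E] [NormedSpace ℝ E]
    {α : Type*} (s : Finset α) (η : α → ℝ) (g : α → E) {a G : ℝ}
    (hη : ∀ i ∈ s, 0 ≤ η i ∧ η i ≤ a) (hg : ∀ i ∈ s, ‖g i‖ ≤ G) :
    ‖∑ i ∈ s, η i • g i‖ ≤ #s * (a * G) := by
  rw [← nsmul_eq_mul]
  refine (norm_sum_le _ _).trans (sum_le_card_nsmul _ _ _ fun i hi => ?_)
  obtain ⟨hη0, hηa⟩ := hη i hi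
  rw [norm_smul, Real.norm_of_nonneg hη0]
  exact mul_le_mul hηa (hg i hi) (norm_nonneg _) (hη0.trans hηa)

theorem stmt_3_general {H : Type*} [NormedAddCommGroup H] [InnerProductSpace ℝ H]
    (E : ℕ) (hE : 1 ≤ E) (G : ℝ) (hG : 0 ≤ G) (τ t : ℕ)
    (hEt : t - τ ≤ E - 1)
    (η : ℕ → ℝ) (hηpos : ∀ i, 0 < η i) (hηmono : ∀ i j, i ≤ j → η j ≤ η i)
    (hη2 : η τ ≤ 2 * η t)
    {ι : Type*} [Fintype ι] (q : ι → ℝ) (hq : ∀ k, 0 ≤ q k) (hsum : ∑ k, q k = 1)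
    (wτ : H) (g : ι → ℕ → H) (hg : ∀ k i, τ ≤ i → i ≤ t - 1 → ‖g k i‖ ≤ G)
    (w : ι → H) (hw : ∀ k, w k = wτ - ∑ i ∈ Finset.Ico τ t, η i • g k i)
    (wbar : H) (hwbar : wbar = ∑ k, q k • w k) :
    ∑ k, q k * ‖w k - wbar‖ ^ 2 ≤ 4 * η t ^ 2 * ((E : ℝ) - 1) ^ 2 * G ^ 2 := by
  have hsteps : ((t - τ : ℕ) : ℝ) ≤ (E : ℝ) - 1 := by
    rw [← Nat.cast_one, ← Nat.cast_sub hE]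
    exact_mod_cast hEt
  have hdrift : ∀ k, ‖w k - wτ‖ ≤ 2 * η t * ((E : ℝ) - 1) * G := fun k => by
    rw [hw k, sub_sub_cancel_left, norm_neg]
    calc ‖∑ i ∈ Ico τ t, η i • g k i‖
        ≤ #(Ico τ t) * (2 * η t * G) := by
          refine norm_sum_smul_le_card_mul _ _ _ (fun i hi => ?_) fun i hi => ?_
          · exact ⟨(hηpos i).le, (hηmono τ i (mem_Ico.mp hi).1).trans hη2⟩
          · exact hg k i (mem_Ico.mp hi).1 (Nat.le_sub_one_of_lt (mem_Ico.mp hi).2)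
      _ ≤ ((E : ℝ) - 1) * (2 * η t * G) := by
          rw [Nat.card_Ico]
          gcongr
          exact mul_nonneg (mul_nonneg zero_le_two (hηpos t).le) hG
      _ = 2 * η t * ((E : ℝ) - 1) * G := by ring
  subst hwbar
  calc ∑ k, q k * ‖w k - ∑ j, q j • w j‖ ^ 2
      ≤ (2 * η t * ((E : ℝ) - 1) * G) ^ 2 :=
        sum_mul_norm_sub_weighted_mean_sq_le_sq q hq hsum w wτ hdrift
    _ = 4 * η t ^ 2 * ((E : ℝ) - 1) ^ 2 * G ^ 2 := by ring

/-- Average discrepancy caused by at most `E - 1` local gradient-descent updates of bounded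
norm `G` started from a common iterate `wτ` (deterministic form of Lemma 3). -/
theorem stmt_3 {H : Type*} [NormedAddCommGroup H] [InnerProductSpace ℝ H]
    (E : ℕ) (hE : 1 ≤ E) (G : ℝ) (hG : 0 ≤ G) (τ t : ℕ) (hτt : τ ≤ t)
    (hEt : t - τ ≤ E - 1)
    (η : ℕ → ℝ) (hηpos : ∀ i, 0 < η i) (hηmono : ∀ i j, i ≤ j → η j ≤ η i)
    (hη2 : η τ ≤ 2 * η t)
    {ι : Type*} [Fintype ι] (q : ι → ℝ) (hq : ∀ k, 0 ≤ q k) (hsum : ∑ k, q k = 1)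
    (wτ : H) (g : ι → ℕ → H) (hg : ∀ k i, τ ≤ i → i ≤ t - 1 → ‖g k i‖ ≤ G)
    (w : ι → H) (hw : ∀ k, w k = wτ - ∑ i ∈ Finset.Ico τ t, η i • g k i)
    (wbar : H) (hwbar : wbar = ∑ k, q k • w k) :
    ∑ k, q k * ‖w k - wbar‖ ^ 2 ≤ 4 * η t ^ 2 * ((E : ℝ) - 1) ^ 2 * G ^ 2 :=
  stmt_3_general E hE G hG τ t hEt η hηpos hηmono hη2 q hq hsum wτ g hg w hw wbar hwbar
end

section
/- Let H be a real Hilbert space, ι a finite index set, P ⊆ ι, and p : ι → ℝ with p_k ≥ 0 for every k and ∑_{k∈P} p_k = 1. Let I : ι → {0,1} satisfy I_k = 1 for every k ∈ P; set S = ∑_{k∉P} p_k I_k and q_k = p_k I_k / (1+S) for every k (so ∑_{k∈ι} q_k = 1). Let 0 < μ ≤ L and for each k ∈ ι let F_k : H → ℝ be differentiable, L-smooth and μ-strongly convex, and let F_k* ∈ ℝ satisfy F_k* ≤ F_k(v) for all v ∈ H. Define F = ∑_{k∈P} p_k F_k, let w* ∈ H be a global minimizer of F, and set F* = F(w*), Γ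 = F* − ∑_{k∈P} p_k F_k*, and Γ_k = F_k(w*) − F_k* for each k. Let w_k ∈ H for each k ∈ ι, w̄ = ∑_{k∈ι} q_k w_k, ḡ = ∑_{k∈ι} q_k ∇F_k(w_k), and let η be a real number with 0 < η ≤ 1/(4L). Then ‖w̄ − η ḡ − w*‖² ≤ (1 − ημ)·‖w̄ − w*‖² + 2·∑_{k∈ι} q_k ‖w_k − w̄‖² + 6Lη²·Γ/(1+S) + 2η·∑_{k∉P} q_k Γ_k. -/
open scoped RealInnerProductSpace

/-- Jensen-type inequality for the squared norm of a convex combination. -/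
lemma jensen_norm_sq_aux {H : Type*} [NormedAddCommGroup H] [InnerProductSpace ℝ H]
    {ι : Type*} [Fintype ι] (q : ι → ℝ) (hq0 : ∀ k, 0 ≤ q k) (hq1 : ∑ k, q k = 1)
    (v : ι → H) : ‖∑ k, q k • v k‖ ^ 2 ≤ ∑ k, q k * ‖v k‖ ^ 2 := by
  have h1 : ‖∑ k, q k • v k‖ ≤ ∑ k, q k * ‖v k‖ := by
    refine (norm_sum_le _ _).trans (le_of_eq (Finset.sum_congr rfl fun k _ => ?_))
    rw [norm_smul, Real.norm_eq_abs, abs_of_nonneg (hq0 k)]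
  have h2 : (0:ℝ) ≤ ∑ k, q k * ‖v k‖ :=
    Finset.sum_nonneg fun k _ => mul_nonneg (hq0 k) (norm_nonneg _)
  have h3 : (∑ k, q k * ‖v k‖) ^ 2 ≤ (∑ k, q k) * ∑ k, q k * ‖v k‖ ^ 2 := by
    have := Finset.sum_mul_sq_le_sq_mul_sq Finset.univ
      (fun k => Real.sqrt (q k)) (fun k => Real.sqrt (q k) * ‖v k‖)
    calc (∑ k, q k * ‖v k‖) ^ 2
        = (∑ k, Real.sqrt (q k) * (Real.sqrt (q k) * ‖v k‖)) ^ 2 := by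
          congr 1; refine Finset.sum_congr rfl fun k _ => ?_
          rw [← mul_assoc, Real.mul_self_sqrt (hq0 k)]
      _ ≤ (∑ k, Real.sqrt (q k) ^ 2) * ∑ k, (Real.sqrt (q k) * ‖v k‖) ^ 2 := this
      _ = (∑ k, q k) * ∑ k, q k * ‖v k‖ ^ 2 := by
          congr 1
          · exact Finset.sum_congr rfl fun k _ => Real.sq_sqrt (hq0 k)
          · refine Finset.sum_congr rfl fun k _ => ?_
            rw [mul_pow, Real.sq_sqrt (hq0 k)]
  calc ‖∑ k, q k • v k‖ ^ 2 ≤ (∑ k, q k * ‖v k‖) ^ 2 := by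
        exact pow_le_pow_left₀ (norm_nonneg _) h1 2
    _ ≤ (∑ k, q k) * ∑ k, q k * ‖v k‖ ^ 2 := h3
    _ = ∑ k, q k * ‖v k‖ ^ 2 := by rw [hq1, one_mul]

set_option maxHeartbeats 1000000 in
/-- Deterministic (pointwise) core of Lemma 5 (one-step SGD for FedALIGN). -/
theorem stmt_6 {H : Type*} [NormedAddCommGroup H] [InnerProductSpace ℝ H] [CompleteSpace H]
    {ι : Type*} [Fintype ι] [DecidableEq ι] (P : Finset ι)
    (p : ι → ℝ) (hp : ∀ k, 0 ≤ p k) (hpsum : ∑ k ∈ P, p k = 1)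
    (I : ι → ℝ) (hI01 : ∀ k, I k = 0 ∨ I k = 1) (hIP : ∀ k ∈ P, I k = 1)
    (S : ℝ) (hS : S = ∑ k ∈ Pᶜ, p k * I k)
    (q : ι → ℝ) (hq : ∀ k, q k = p k * I k / (1 + S))
    (μ L : ℝ) (hμ : 0 < μ) (hμL : μ ≤ L)
    (F : ι → H → ℝ) (hdiff : ∀ k, Differentiable ℝ (F k))
    (hsmooth : ∀ k, ∀ u v : H,
      F k v ≤ F k u + ⟪gradient (F k) u, v - u⟫ + L / 2 * ‖v - u‖ ^ 2)
    (hconv : ∀ k, ∀ u v : H,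
      F k v ≥ F k u + ⟪gradient (F k) u, v - u⟫ + μ / 2 * ‖v - u‖ ^ 2)
    (Fmin : ι → ℝ) (hFmin : ∀ k, ∀ v : H, Fmin k ≤ F k v)
    (wstar : H) (hwstar : ∀ v : H, (∑ k ∈ P, p k * F k wstar) ≤ ∑ k ∈ P, p k * F k v)
    (Γ : ℝ) (hΓ : Γ = (∑ k ∈ P, p k * F k wstar) - ∑ k ∈ P, p k * Fmin k)
    (Γk : ι → ℝ) (hΓk : ∀ k, Γk k = F k wstar - Fmin k)
    (w : ι → H) (wbar : H) (hwbar : wbar = ∑ k, q k • w k)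
    (gbar : H) (hgbar : gbar = ∑ k, q k • gradient (F k) (w k))
    (η : ℝ) (hη0 : 0 < η) (hη : η ≤ 1 / (4 * L)) :
    ‖wbar - η • gbar - wstar‖ ^ 2 ≤
      (1 - η * μ) * ‖wbar - wstar‖ ^ 2 + 2 * ∑ k, q k * ‖w k - wbar‖ ^ 2 +
        6 * L * η ^ 2 * (Γ / (1 + S)) + 2 * η * ∑ k ∈ Pᶜ, q k * Γk k := by
  have hL : 0 < L := lt_of_lt_of_le hμ hμL
  have hI0 : ∀ k, 0 ≤ I k := fun k => by rcases hI01 k with h | h <;> rw [h] <;> norm_num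
  have hS0 : 0 ≤ S := by
    rw [hS]; exact Finset.sum_nonneg fun k _ => mul_nonneg (hp k) (hI0 k)
  have h1S : 0 < 1 + S := by linarith
  have hq0 : ∀ k, 0 ≤ q k := fun k => by
    rw [hq k]; exact div_nonneg (mul_nonneg (hp k) (hI0 k)) h1S.le
  have hpiP : ∑ k ∈ P, p k * I k = 1 := by
    rw [← hpsum]; exact Finset.sum_congr rfl fun k hk => by rw [hIP k hk, mul_one]
  have hqsum : ∑ k, q k = 1 := by
    have := Finset.sum_add_sum_compl P (fun k => p k * I k)
    have huniv : ∑ k, p k * I k = 1 + S := by rw [← this, hpiP, ← hS]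
    calc ∑ k, q k = ∑ k, p k * I k / (1 + S) := Finset.sum_congr rfl fun k _ => hq k
      _ = (∑ k, p k * I k) / (1 + S) := by rw [Finset.sum_div]
      _ = 1 := by rw [huniv]; field_simp
  have hqP : ∀ k ∈ P, q k = p k / (1 + S) := fun k hk => by rw [hq k, hIP k hk, mul_one]
  have hηL : η * L ≤ 1 / 4 := by
    have h4 : η * (4 * L) ≤ 1 := by
      rw [← le_div_iff₀ (by positivity)]; exact hη
    linarith
  -- gradient norm squared bound
  have hGrad2 : ∀ k, ∀ x : H, ‖gradient (F k) x‖ ^ 2 ≤ 2 * L * (F k x - Fmin k) := by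
    intro k x
    set g := gradient (F k) x with hg
    have hs := hsmooth k x (x - L⁻¹ • g)
    have hsub : x - L⁻¹ • g - x = (-L⁻¹) • g := by
      rw [sub_sub_cancel_left, neg_smul]
    rw [hsub] at hs
    rw [real_inner_smul_right, real_inner_self_eq_norm_sq, norm_smul, ← hg] at hs
    have hFm := hFmin k (x - L⁻¹ • g)
    have habs : ‖(-L⁻¹ : ℝ)‖ = L⁻¹ := by
      rw [norm_neg, Real.norm_eq_abs, abs_of_nonneg (by positivity)]
    rw [habs] at hs
    have key : -L⁻¹ * ‖g‖^2 + L / 2 * (L⁻¹ * ‖g‖)^2 = -(‖g‖^2 / (2*L)) := by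
      field_simp; ring
    have h2 : ‖g‖^2 / (2*L) ≤ F k x - Fmin k := by
      linarith [key, hs, hFm]
    calc ‖g‖^2 = ‖g‖^2 / (2*L) * (2*L) := by field_simp
      _ ≤ (F k x - Fmin k) * (2*L) := by
          exact mul_le_mul_of_nonneg_right h2 (by positivity)
      _ = 2*L*(F k x - Fmin k) := by ring
  set g : ι → H := fun k => gradient (F k) (w k) with hgdef
  -- per-k master inequality
  have M : ∀ k, -(2*η) * ⟪g k, wbar - wstar⟫ + η^2 * ‖g k‖^2 ≤
      2 * ‖w k - wbar‖^2 - (2*η*(1-2*η*L)*(1-η*L)) * (F k wbar - Fmin k)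
      + 2*η * Γk k - η*μ * ‖w k - wstar‖^2 := by
    intro k
    set h := gradient (F k) wbar with hh
    have i8 : ⟪g k, wbar - wstar⟫ = ⟪g k, wbar - w k⟫ + ⟪g k, w k - wstar⟫ := by
      rw [← inner_add_right, sub_add_sub_cancel]
    have i1 : (0:ℝ) ≤ ‖(wbar - w k) + η • g k‖ ^ 2 := by positivity
    have i1' : ‖(wbar - w k) + η • g k‖ ^ 2
        = ‖wbar - w k‖^2 + 2 * (η * ⟪g k, wbar - w k⟫) + η^2 * ‖g k‖^2 := by
      rw [norm_add_sq_real, real_inner_smul_right, norm_smul, Real.norm_eq_abs,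
        mul_pow, sq_abs, real_inner_comm]
    have hnsym : ‖wbar - w k‖ = ‖w k - wbar‖ := norm_sub_rev _ _
    rw [hnsym] at i1'
    have d1 : -(2*η) * ⟪g k, wbar - w k⟫ ≤ ‖w k - wbar‖^2 + η^2 * ‖g k‖^2 := by
      linarith [i1, i1'.symm.le]
    -- strong convexity at w k towards wstar
    have i2 := hconv k (w k) wstar
    have i2' : ⟪g k, wstar - w k⟫ = -⟪g k, w k - wstar⟫ := by
      rw [← inner_neg_right, neg_sub]
    have i2n : ‖wstar - w k‖ = ‖w k - wstar‖ := norm_sub_rev _ _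
    rw [i2', i2n] at i2
    have i2m := mul_le_mul_of_nonneg_left
      (i2 : F k (w k) + -⟪g k, w k - wstar⟫ + μ/2 * ‖w k - wstar‖^2 ≤ F k wstar)
      (by linarith : (0:ℝ) ≤ 2*η)
    have d2 : -(2*η) * ⟪g k, w k - wstar⟫
        ≤ -(2*η) * (F k (w k) - F k wstar) - η*μ * ‖w k - wstar‖^2 := by
      linarith [i2m]
    have i3 := hGrad2 k (w k)
    have i3' : η^2 * ‖g k‖^2 ≤ η^2 * (2 * L * (F k (w k) - Fmin k)) :=
      mul_le_mul_of_nonneg_left i3 (sq_nonneg η)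
    -- convexity at wbar towards w k, with AM-GM
    have i4 := hconv k wbar (w k)
    have i5 : (0:ℝ) ≤ ‖(w k - wbar) + η • h‖ ^ 2 := by positivity
    have i5' : ‖(w k - wbar) + η • h‖ ^ 2
        = ‖w k - wbar‖^2 + 2 * (η * ⟪h, w k - wbar⟫) + η^2 * ‖h‖^2 := by
      rw [norm_add_sq_real, real_inner_smul_right, norm_smul, Real.norm_eq_abs,
        mul_pow, sq_abs, real_inner_comm]
    have i6 := hGrad2 k wbar
    have i6' : η^2 * ‖h‖^2 ≤ η^2 * (2 * L * (F k wbar - Fmin k)) :=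
      mul_le_mul_of_nonneg_left i6 (sq_nonneg η)
    -- d3 : 2η(1-ηL)E - ‖Δ‖² ≤ 2η D
    have hμnn : (0:ℝ) ≤ μ/2 * ‖w k - wbar‖^2 := by positivity
    have i4m := mul_le_mul_of_nonneg_left
      (i4 : F k wbar + ⟪h, w k - wbar⟫ + μ/2 * ‖w k - wbar‖^2 ≤ F k (w k))
      (by linarith : (0:ℝ) ≤ 2*η)
    have d3 : 2*η*(1-η*L) * (F k wbar - Fmin k) - ‖w k - wbar‖^2
        ≤ 2*η * (F k (w k) - Fmin k) := by
      have h0 : (0:ℝ) ≤ 2*η*(μ/2*‖w k - wbar‖^2) := by positivity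
      linarith [i4m, i5, i5'.symm.le, i6', h0]
    have hc : (0:ℝ) ≤ 1 - 2*η*L := by linarith [hηL]
    have p1 := mul_le_mul_of_nonneg_left d3 hc
    have hnn : (0:ℝ) ≤ 2*η*L * ‖w k - wbar‖^2 := by positivity
    have hDk : F k (w k) - F k wstar = (F k (w k) - Fmin k) - Γk k := by
      rw [hΓk k]; ring
    have hDk2 : 2*η*(F k (w k) - F k wstar) = 2*η*((F k (w k) - Fmin k) - Γk k) := by
      rw [hΓk k]; ring
    rw [i8]
    linarith [d1, d2, i3', p1, hnn, hDk2]
  -- global quantities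
  set A := ∑ k, q k * ⟪g k, wbar - wstar⟫ with hA
  set B := ∑ k, q k * ‖g k‖^2 with hB
  set W := ∑ k, q k * ‖w k - wbar‖^2 with hW
  set V := ∑ k, q k * ‖w k - wstar‖^2 with hV
  set E' := ∑ k, q k * (F k wbar - Fmin k) with hE'
  set G' := ∑ k, q k * Γk k with hG'
  set X := ‖wbar - wstar‖^2 with hX
  have T1 : ⟪wbar - wstar, gbar⟫ = A := by
    rw [hgbar, inner_sum]
    exact Finset.sum_congr rfl fun k _ => by
      rw [real_inner_smul_right, real_inner_comm]
  have T0 : ‖wbar - η • gbar - wstar‖^2 = X - 2*η*A + η^2 * ‖gbar‖^2 := by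
    rw [sub_right_comm, norm_sub_sq_real, real_inner_smul_right, T1, norm_smul,
      Real.norm_eq_abs, mul_pow, sq_abs]
    ring
  have T2 : ‖gbar‖^2 ≤ B := by
    rw [hgbar]; exact jensen_norm_sq_aux q hq0 hqsum _
  have T2' : η^2 * ‖gbar‖^2 ≤ η^2 * B := mul_le_mul_of_nonneg_left T2 (sq_nonneg η)
  have T3 : X ≤ V := by
    have heq : ∑ k, q k • (w k - wstar) = wbar - wstar := by
      rw [hwbar]
      rw [show (∑ k, q k • (w k - wstar)) = (∑ k, q k • w k) - (∑ k, q k) • wstar by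
        rw [Finset.sum_smul, ← Finset.sum_sub_distrib]
        exact Finset.sum_congr rfl fun k _ => smul_sub _ _ _]
      rw [hqsum, one_smul]
    rw [hX, ← heq]
    exact jensen_norm_sq_aux q hq0 hqsum _
  -- summed master inequality
  have T4 : -(2*η)*A + η^2*B ≤ 2*W - (2*η*(1-2*η*L)*(1-η*L)) * E' + 2*η*G' - η*μ*V := by
    have hsum := Finset.sum_le_sum (fun k (_ : k ∈ Finset.univ) =>
      mul_le_mul_of_nonneg_left (M k) (hq0 k))
    have lhs_eq : ∑ k, q k * (-(2*η) * ⟪g k, wbar - wstar⟫ + η^2 * ‖g k‖^2)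
        = -(2*η)*A + η^2*B := by
      rw [hA, hB, Finset.mul_sum, Finset.mul_sum, ← Finset.sum_add_distrib]
      exact Finset.sum_congr rfl fun k _ => by ring
    have rhs_eq : ∑ k, q k * (2 * ‖w k - wbar‖^2
          - (2*η*(1-2*η*L)*(1-η*L)) * (F k wbar - Fmin k)
          + 2*η * Γk k - η*μ * ‖w k - wstar‖^2)
        = 2*W - (2*η*(1-2*η*L)*(1-η*L)) * E' + 2*η*G' - η*μ*V := by
      rw [hW, hV, hE', hG', Finset.mul_sum, Finset.mul_sum, Finset.mul_sum, Finset.mul_sum]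
      rw [← Finset.sum_sub_distrib, ← Finset.sum_add_distrib, ← Finset.sum_sub_distrib]
      exact Finset.sum_congr rfl fun k _ => by ring
    rw [lhs_eq, rhs_eq] at hsum
    exact hsum
  -- Γ as a sum of p_k Γk over P
  have hΓsum : Γ = ∑ k ∈ P, p k * Γk k := by
    rw [hΓ, ← Finset.sum_sub_distrib]
    exact Finset.sum_congr rfl fun k _ => by rw [hΓk k]; ring
  have hΓk0 : ∀ k, 0 ≤ Γk k := fun k => by rw [hΓk k]; linarith [hFmin k wstar]
  have hΓ0 : 0 ≤ Γ := by
    rw [hΓsum]; exact Finset.sum_nonneg fun k _ => mul_nonneg (hp k) (hΓk0 k)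
  -- split helper over P and Pᶜ
  have hqPdiv : ∀ (f : ι → ℝ), ∑ k ∈ P, q k * f k = (∑ k ∈ P, p k * f k) / (1+S) := by
    intro f
    rw [Finset.sum_div]
    exact Finset.sum_congr rfl fun k hk => by rw [hqP k hk, div_mul_eq_mul_div]
  -- T5 : Γ/(1+S) ≤ E'
  have T5 : Γ / (1+S) ≤ E' := by
    have hsplit := Finset.sum_add_sum_compl P (fun k => q k * (F k wbar - Fmin k))
    have hcompl : (0:ℝ) ≤ ∑ k ∈ Pᶜ, q k * (F k wbar - Fmin k) :=
      Finset.sum_nonneg fun k _ => mul_nonneg (hq0 k) (by linarith [hFmin k wbar])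
    have hPpart : Γ / (1+S) ≤ ∑ k ∈ P, q k * (F k wbar - Fmin k) := by
      rw [hqPdiv]
      have hnum : Γ ≤ ∑ k ∈ P, p k * (F k wbar - Fmin k) := by
        have heq : ∑ k ∈ P, p k * (F k wbar - Fmin k)
            = (∑ k ∈ P, p k * F k wbar) - ∑ k ∈ P, p k * Fmin k := by
          rw [← Finset.sum_sub_distrib]
          exact Finset.sum_congr rfl fun k _ => by ring
        rw [hΓ, heq]
        linarith [hwstar wbar]
      gcongr
    rw [hE', ← hsplit]
    linarith
  -- T6 : G' = Γ/(1+S) + ∑_{Pᶜ} q Γk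
  have T6 : G' = Γ/(1+S) + ∑ k ∈ Pᶜ, q k * Γk k := by
    have hsplit := Finset.sum_add_sum_compl P (fun k => q k * Γk k)
    rw [hG', ← hsplit, hqPdiv, hΓsum]
  -- T7
  have T7 : (2*η - 2*η*(1-2*η*L)*(1-η*L)) * (Γ/(1+S)) ≤ 6*L*η^2 * (Γ/(1+S)) := by
    have hcoef : 2*η - 2*η*(1-2*η*L)*(1-η*L) ≤ 6*L*η^2 := by nlinarith [mul_nonneg (mul_nonneg (sq_nonneg η) hη0.le) (mul_nonneg hL.le hL.le)]
    have hΓdiv : 0 ≤ Γ/(1+S) := div_nonneg hΓ0 h1S.le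
    exact mul_le_mul_of_nonneg_right hcoef hΓdiv
  have hβnn : (0:ℝ) ≤ 2*η*(1-2*η*L)*(1-η*L) := by
    have h1 : (0:ℝ) ≤ 1 - 2*η*L := by linarith [hηL]
    have h2 : (0:ℝ) ≤ 1 - η*L := by linarith [hηL]
    have := mul_nonneg (mul_nonneg (by linarith : (0:ℝ) ≤ 2*η) h1) h2
    linarith [this]
  have hβE : (2*η*(1-2*η*L)*(1-η*L)) * (Γ/(1+S)) ≤ (2*η*(1-2*η*L)*(1-η*L)) * E' :=
    mul_le_mul_of_nonneg_left T5 hβnn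
  have hημ : (0:ℝ) ≤ η*μ := by positivity
  have hμV : η*μ*X ≤ η*μ*V := mul_le_mul_of_nonneg_left T3 hημ
  rw [T0]
  rw [T6] at T4
  linarith [T2', T4, hβE, hμV, T7]
end

section
/- Let μ > 0 and γ > 2 be real numbers, and let Δ, B, D : ℕ → ℝ be sequences with Δ_t ≥ 0, B_t ≥ 0 and D_t ≥ 0 for all t. Suppose that for all t ≥ 0, Δ_{t+1} ≤ (1 − 2/(t+γ))·Δ_t + (4/(μ²(t+γ)²))·B_t + (2/(μ(t+γ)))·D_t. For each t define B̄_t = (1/(t+γ−2))·∑_{i=0}^{t−1} B_i and D̄_t = (1/(t+γ−2))·∑_{i=0}^{t−1} D_i (empty sums equal 0), and v_t = (4/μ²)·B̄_t + (2/μ)·(t+γ)·D̄_t + γ·Δ_0. Then Δ_t ≤ v_t/(t+γ) for all t ≥ 0. -/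
lemma step_aux (μ a SB SD Bt Dt c Δt Δt' : ℝ) (hμ : 0 < μ) (ha : 2 < a)
    (hSB : 0 ≤ SB) (hSD : 0 ≤ SD) (hBt : 0 ≤ Bt) (hDt : 0 ≤ Dt) (hc : 0 ≤ c)
    (hIH : Δt ≤ ((4 / μ ^ 2) * (1 / (a - 2) * SB) + (2 / μ) * a * (1 / (a - 2) * SD) + c) / a)
    (hrec : Δt' ≤ (1 - 2 / a) * Δt + 4 / (μ ^ 2 * a ^ 2) * Bt + 2 / (μ * a) * Dt) :
    Δt' ≤ ((4 / μ ^ 2) * (1 / (a + 1 - 2) * (SB + Bt))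
      + (2 / μ) * (a + 1) * (1 / (a + 1 - 2) * (SD + Dt)) + c) / (a + 1) := by
  have ha0 : (0:ℝ) < a := by linarith
  have ha2 : (0:ℝ) < a - 2 := by linarith
  have ha1 : (0:ℝ) < a - 1 := by linarith
  have hfac : 0 ≤ 1 - 2 / a := by
    rw [sub_nonneg, div_le_one ha0]; linarith
  have h1 : Δt' ≤ (1 - 2 / a) * (((4 / μ ^ 2) * (1 / (a - 2) * SB) + (2 / μ) * a * (1 / (a - 2) * SD) + c) / a) + 4 / (μ ^ 2 * a ^ 2) * Bt + 2 / (μ * a) * Dt := by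
    calc Δt' ≤ (1 - 2 / a) * Δt + 4 / (μ ^ 2 * a ^ 2) * Bt + 2 / (μ * a) * Dt := hrec
    _ ≤ _ := by gcongr
  refine h1.trans ?_
  have hμ' : μ ≠ 0 := hμ.ne'
  have ha' : a ≠ 0 := ha0.ne'
  have ha2' : a - 2 ≠ 0 := ha2.ne'
  have ha1' : a - 1 ≠ 0 := ha1.ne'
  have hap1 : a + 1 ≠ 0 := by positivity
  have h12 : a + 1 - 2 = a - 1 := by ring
  rw [h12, ← sub_nonneg]
  have expand : (4 / μ ^ 2 * (1 / (a - 1) * (SB + Bt)) + 2 / μ * (a + 1) * (1 / (a - 1) * (SD + Dt)) + c) / (a + 1) - ((1 - 2 / a) * ((4 / μ ^ 2 * (1 / (a - 2) * SB) + 2 / μ * a * (1 / (a - 2) * SD) + c) / a) + 4 / (μ ^ 2 * a ^ 2) * Bt + 2 / (μ * a) * Dt) = (4 * (SB + Bt)) / (μ ^ 2) * (1 / ((a+1)*(a-1)) - 1 / (a^2)) + (2 * (SD + Dt)) / μ * (1/(a-1) - 1/a) + c * (1/(a+1) - (a-2)/(a^2)) := by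
    field_simp
    ring
  rw [expand]
  have e1 : 0 ≤ 1 / ((a+1)*(a-1)) - 1 / (a^2) := by
    rw [sub_nonneg, div_le_div_iff₀ (by positivity) (by positivity)]
    nlinarith
  have e2 : 0 ≤ 1/(a-1) - 1/a := by
    rw [sub_nonneg, div_le_div_iff₀ ha0 ha1]
    nlinarith
  have e3 : 0 ≤ 1/(a+1) - (a-2)/(a^2) := by
    rw [sub_nonneg, div_le_div_iff₀ (by positivity) (by positivity)]
    nlinarith
  exact add_nonneg (add_nonneg (mul_nonneg (by positivity) e1) (mul_nonneg (by positivity) e2)) (mul_nonneg hc e3)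

/-- Inductive sequence lemma at the heart of the proof of Theorem 1. -/
theorem stmt_8 (μ γ : ℝ) (hμ : 0 < μ) (hγ : 2 < γ)
    (Δ B D : ℕ → ℝ) (hΔ : ∀ t, 0 ≤ Δ t) (hB : ∀ t, 0 ≤ B t) (hD : ∀ t, 0 ≤ D t)
    (hrec : ∀ t : ℕ, Δ (t + 1) ≤ (1 - 2 / (t + γ)) * Δ t
      + 4 / (μ ^ 2 * (t + γ) ^ 2) * B t + 2 / (μ * (t + γ)) * D t) :
    ∀ t : ℕ, Δ t ≤
      ((4 / μ ^ 2) * ((1 / (t + γ - 2)) * ∑ i ∈ Finset.range t, B i)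
        + (2 / μ) * (t + γ) * ((1 / (t + γ - 2)) * ∑ i ∈ Finset.range t, D i)
        + γ * Δ 0) / (t + γ) := by
  intro t
  induction t with
  | zero =>
    simp only [Finset.range_zero, Finset.sum_empty, Nat.cast_zero, mul_zero, zero_add]
    rw [mul_comm γ (Δ 0), mul_div_assoc, div_self (by linarith), mul_one]
  | succ t ih =>
    have hta : (2:ℝ) < (t:ℝ) + γ := by
      have : (0:ℝ) ≤ (t:ℝ) := Nat.cast_nonneg t
      linarith
    have key := step_aux μ ((t:ℝ) + γ) (∑ i ∈ Finset.range t, B i)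
      (∑ i ∈ Finset.range t, D i) (B t) (D t) (γ * Δ 0) (Δ t) (Δ (t+1)) hμ hta
      (Finset.sum_nonneg fun i _ => hB i) (Finset.sum_nonneg fun i _ => hD i)
      (hB t) (hD t) (mul_nonneg (by linarith) (hΔ 0)) ih (hrec t)
    have hc : ((t+1:ℕ):ℝ) + γ = ((t:ℝ) + γ) + 1 := by push_cast; ring
    rw [Finset.sum_range_succ, Finset.sum_range_succ, hc]
    exact key
end

section
/- Let μ > 0 and γ > 2 be real numbers, let B ≥ 0 and D ≥ 0 be constants, and let Δ : ℕ → ℝ be a sequence with Δ_t ≥ 0 for all t, satisfying for all t ≥ 0: Δ_{t+1} ≤ (1 − 2/(t+γ))·Δ_t + 4B/(μ²(t+γ)²) + 2D/(μ(t+γ)). Then for every T ≥ 0, Δ_T ≤ (4B/μ² + γ·Δ_0)/(T+γ) + 2D/μ. -/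
lemma stmt_9_aux (s C a e : ℝ) (hs : 2 < s) (ha : 0 ≤ a) (haC : a ≤ C) (he : 0 ≤ e) :
    (1 - 2 / s) * (C / s + e) + a / s ^ 2 + e / s ≤ C / (s + 1) + e := by
  have hs0 : (0:ℝ) < s := by linarith
  have hs1 : (0:ℝ) < s + 1 := by linarith
  have h2 : (1 - 2 / s) * (C / s + e) + a / s ^ 2 + e / s - (C / (s + 1) + e)
      = ((s - 2) * C * (s + 1) + a * (s + 1) - C * s ^ 2 - e * s * (s + 1)) / (s ^ 2 * (s + 1)) := by
    field_simp
    ring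
  have hC : 0 ≤ C := le_trans ha haC
  have hnum : (s - 2) * C * (s + 1) + a * (s + 1) - C * s ^ 2 - e * s * (s + 1) ≤ 0 := by
    nlinarith [mul_pos hs0 hs1, mul_nonneg (sub_nonneg.mpr haC) hs1.le, mul_nonneg (mul_nonneg he hs0.le) hs1.le]
  have hden : (0:ℝ) < s ^ 2 * (s + 1) := by positivity
  have h3 := div_nonpos_of_nonpos_of_nonneg hnum hden.le
  linarith [h2 ▸ h3]

/-- Constant-bound corollary of the inductive sequence lemma (Theorems 1 and A.2). -/
theorem stmt_9 (μ γ B D : ℝ) (hμ : 0 < μ) (hγ : 2 < γ) (hB : 0 ≤ B) (hD : 0 ≤ D)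
    (Δ : ℕ → ℝ) (hΔ : ∀ t, 0 ≤ Δ t)
    (hrec : ∀ t : ℕ, Δ (t + 1) ≤ (1 - 2 / (t + γ)) * Δ t
      + 4 * B / (μ ^ 2 * (t + γ) ^ 2) + 2 * D / (μ * (t + γ))) :
    ∀ T : ℕ, Δ T ≤ (4 * B / μ ^ 2 + γ * Δ 0) / (T + γ) + 2 * D / μ := by
  have hγ0 : (0:ℝ) < γ := by linarith
  have ha : 0 ≤ 4 * B / μ ^ 2 := by positivity
  have he : 0 ≤ 2 * D / μ := by positivity
  set a : ℝ := 4 * B / μ ^ 2 with ha_def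
  set e : ℝ := 2 * D / μ with he_def
  intro T
  induction T with
  | zero =>
    simp only [Nat.cast_zero, zero_add]
    have h1 : Δ 0 ≤ (a + γ * Δ 0) / γ := by
      rw [le_div_iff₀ hγ0]; nlinarith [hΔ 0]
    linarith
  | succ t ih =>
    have hs : (2:ℝ) < (t:ℝ) + γ := by
      have : (0:ℝ) ≤ (t:ℝ) := Nat.cast_nonneg t
      linarith
    set s : ℝ := (t:ℝ) + γ with hs_def
    have hs0 : (0:ℝ) < s := by linarith
    have hs1 : (0:ℝ) < s + 1 := by linarith
    have hrec' : Δ (t + 1) ≤ (1 - 2 / s) * Δ t + a / s ^ 2 + e / s := by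
      have h1 : 4 * B / (μ ^ 2 * s ^ 2) = a / s ^ 2 := by
        rw [ha_def]; field_simp
      have h2 : 2 * D / (μ * s) = e / s := by
        rw [he_def]; field_simp
      have := hrec t
      rw [h1, h2] at this
      exact this
    have hcoef : 0 ≤ 1 - 2 / s := by
      rw [sub_nonneg, div_le_one hs0]; linarith
    have hΔt := hΔ t
    have hstep : (1 - 2 / s) * Δ t ≤ (1 - 2 / s) * ((a + γ * Δ 0) / s + e) :=
      mul_le_mul_of_nonneg_left ih hcoef
    have hC : 0 ≤ a + γ * Δ 0 := by nlinarith [hΔ 0]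
    have key : (1 - 2 / s) * ((a + γ * Δ 0) / s + e) + a / s ^ 2 + e / s
        ≤ (a + γ * Δ 0) / (s + 1) + e :=
      stmt_9_aux s (a + γ * Δ 0) a e hs ha (by nlinarith [hΔ 0]) he
    have hfin : Δ (t + 1) ≤ (a + γ * Δ 0) / (s + 1) + e := by
      linarith
    have hcast : ((t + 1 : ℕ) : ℝ) + γ = s + 1 := by
      push_cast [hs_def]; ring
    rw [hcast]
    exact hfin
end

section
/- Let 0 < μ ≤ L be reals, let E ≥ 1 be an integer with E ≤ 8L/μ, set γ = 8L/μ and η_t = 2/(μ(t+γ)) for t ∈ ℕ. Let σ ≥ 0, G ≥ 0 and Γ ≥ 0 be reals, and let Δ, θ', d : ℕ → ℝ be sequences with Δ_t ≥ 0, 0 ≤ θ'_t ≤ 1 and d_t ≥ 0 for all t, satisfying for all t ≥ 0: Δ_{t+1} ≤ (1 − η_t μ)·Δ_t + η_t²·(σ² + 8(E−1)²G² + 6L·Γ·θ'_t) + η_t·d_t. Then for every T ≥ 0, (L/2)·Δ_T ≤ (1/(T+γ))·(C₁ + C₂·θ_T·Γ) + ρ_T, where θ_T = (1/(T+γ−2))·∑_{i=0}^{T−1}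 θ'_i, ρ_T = (L/(μ(T+γ−2)))·∑_{i=0}^{T−1} d_i, C₁ = (2L/μ²)·(σ² + 8(E−1)²G²) + (4L²/μ)·Δ_0, and C₂ = 12L²/μ². -/
/-- Deterministic reduction at the heart of Theorem 1 (convergence of FedALIGN under full
participation). -/
theorem stmt_12 (μ L : ℝ) (hμ : 0 < μ) (hμL : μ ≤ L)
    (E : ℕ) (hE : 1 ≤ E) (hEγ : (E : ℝ) ≤ 8 * L / μ)
    (γ : ℝ) (hγ : γ = 8 * L / μ)
    (η : ℕ → ℝ) (hη : ∀ t : ℕ, η t = 2 / (μ * (t + γ)))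
    (σ G Γ : ℝ) (hσ : 0 ≤ σ) (hG : 0 ≤ G) (hΓ : 0 ≤ Γ)
    (Δ θ' d : ℕ → ℝ) (hΔ : ∀ t, 0 ≤ Δ t)
    (hθ0 : ∀ t, 0 ≤ θ' t) (hθ1 : ∀ t, θ' t ≤ 1) (hd : ∀ t, 0 ≤ d t)
    (hrec : ∀ t : ℕ, Δ (t + 1) ≤ (1 - η t * μ) * Δ t
      + η t ^ 2 * (σ ^ 2 + 8 * ((E : ℝ) - 1) ^ 2 * G ^ 2 + 6 * L * Γ * θ' t) + η t * d t) :
    ∀ T : ℕ, (L / 2) * Δ T ≤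
      (1 / (T + γ)) *
        ((2 * L / μ ^ 2) * (σ ^ 2 + 8 * ((E : ℝ) - 1) ^ 2 * G ^ 2) + (4 * L ^ 2 / μ) * Δ 0
          + (12 * L ^ 2 / μ ^ 2) * ((1 / (T + γ - 2)) * ∑ i ∈ Finset.range T, θ' i) * Γ)
      + (L / (μ * (T + γ - 2))) * ∑ i ∈ Finset.range T, d i := by
  have hL : 0 < L := lt_of_lt_of_le hμ hμL
  have hγ8 : (8:ℝ) ≤ γ := by
    rw [hγ, le_div_iff₀ hμ]; nlinarith
  obtain ⟨B, hBdef⟩ : ∃ B : ℝ, B = σ ^ 2 + 8 * ((E : ℝ) - 1) ^ 2 * G ^ 2 := ⟨_, rfl⟩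
  have hB : 0 ≤ B := by rw [hBdef]; positivity
  simp only [← hBdef] at hrec ⊢
  obtain ⟨A, hAdef⟩ : ∃ A : ℝ, A = 4 * B + μ ^ 2 * γ * Δ 0 := ⟨_, rfl⟩
  have hγΔ : 0 ≤ μ ^ 2 * γ * Δ 0 :=
    mul_nonneg (mul_nonneg (sq_nonneg μ) (by linarith)) (hΔ 0)
  have hA4B : 4 * B ≤ A := by rw [hAdef]; linarith
  have hA0 : 0 ≤ A := by rw [hAdef]; linarith
  -- key claim: denominator-cleared induction
  have key : ∀ T : ℕ, μ ^ 2 * Δ T * (((T:ℝ) + γ) * ((T:ℝ) + γ - 2)) ≤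
      A * ((T:ℝ) + γ - 2) + 24 * L * Γ * (∑ i ∈ Finset.range T, θ' i)
        + 2 * μ * (∑ i ∈ Finset.range T, d i) * ((T:ℝ) + γ) := by
    intro T
    induction T with
    | zero =>
        simp only [Finset.range_zero, Finset.sum_empty, Nat.cast_zero, zero_add, mul_zero,
          zero_mul, add_zero]
        rw [hAdef]
        nlinarith [mul_nonneg hB (show (0:ℝ) ≤ γ - 2 by linarith)]
    | succ t ih =>
        have hx8 : (8:ℝ) ≤ (t:ℝ) + γ := by
          have : (0:ℝ) ≤ (t:ℝ) := Nat.cast_nonneg t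
          linarith
        set x : ℝ := (t:ℝ) + γ with hxdef
        have hx0 : (0:ℝ) < x := by linarith
        have h := hrec t
        rw [hη t] at h
        rw [← hxdef] at h
        have h1 : μ ^ 2 * Δ (t + 1) * x ^ 2 ≤
            μ ^ 2 * (x * (x - 2)) * Δ t + 4 * B + 24 * L * Γ * θ' t + 2 * μ * x * d t := by
          have e1 : μ ^ 2 * ((1 - 2 / (μ * x) * μ) * Δ t
              + (2 / (μ * x)) ^ 2 * (B + 6 * L * Γ * θ' t) + 2 / (μ * x) * d t) * x ^ 2
              = μ ^ 2 * (x * (x - 2)) * Δ t + 4 * B + 24 * L * Γ * θ' t + 2 * μ * x * d t := by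
            field_simp
            ring
          calc μ ^ 2 * Δ (t + 1) * x ^ 2
              = μ ^ 2 * (Δ (t + 1)) * x ^ 2 := by ring
            _ ≤ μ ^ 2 * ((1 - 2 / (μ * x) * μ) * Δ t
                + (2 / (μ * x)) ^ 2 * (B + 6 * L * Γ * θ' t) + 2 / (μ * x) * d t) * x ^ 2 := by
                have hμ2 : (0:ℝ) ≤ μ ^ 2 := sq_nonneg μ
                have hx2 : (0:ℝ) ≤ x ^ 2 := sq_nonneg x
                exact mul_le_mul_of_nonneg_right
                  (mul_le_mul_of_nonneg_left h hμ2) hx2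
            _ = _ := e1
        have hcast : ((t + 1 : ℕ) : ℝ) + γ = x + 1 := by push_cast; rw [hxdef]; ring
        rw [hcast, Finset.sum_range_succ, Finset.sum_range_succ]
        have hΔ1 : 0 ≤ μ ^ 2 * Δ (t + 1) := mul_nonneg (sq_nonneg μ) (hΔ (t + 1))
        have hpos : 0 ≤ 2 * μ * ((∑ i ∈ Finset.range t, d i) + d t) := by
          have hs : 0 ≤ ∑ i ∈ Finset.range t, d i :=
            Finset.sum_nonneg fun i _ => hd i
          have h2 := hd t
          positivity
        linarith [h1, ih, hΔ1, hpos, hA4B]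
  intro T
  have hT0 : (0:ℝ) ≤ (T:ℝ) := Nat.cast_nonneg T
  have hx8 : (8:ℝ) ≤ (T:ℝ) + γ := by linarith
  set x : ℝ := (T:ℝ) + γ with hxdef
  have hx0 : (0:ℝ) < x := by linarith
  have hx2 : (0:ℝ) < x - 2 := by linarith
  set S : ℝ := ∑ i ∈ Finset.range T, θ' i with hSdef
  set D : ℝ := ∑ i ∈ Finset.range T, d i with hDdef
  have hkey := key T
  rw [← hxdef, ← hSdef, ← hDdef] at hkey
  have hdiv : Δ T ≤ (A * (x - 2) + 24 * L * Γ * S + 2 * μ * D * x) / (μ ^ 2 * (x * (x - 2))) := by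
    rw [le_div_iff₀ (by positivity)]
    linarith [hkey]
  have heq : (1 / x) * ((2 * L / μ ^ 2) * B + (4 * L ^ 2 / μ) * Δ 0
        + (12 * L ^ 2 / μ ^ 2) * ((1 / (x - 2)) * S) * Γ) + (L / (μ * (x - 2))) * D
      = (L / 2) * ((A * (x - 2) + 24 * L * Γ * S + 2 * μ * D * x) / (μ ^ 2 * (x * (x - 2)))) := by
    rw [hAdef, hγ]
    field_simp
    ring
  rw [heq]
  exact mul_le_mul_of_nonneg_left hdiv (by positivity)
end

section
/- Let 0 < μ ≤ L be reals, let E ≥ 1 and K ≥ 1 be integers with E ≤ 8L/μ, set γ = 8L/μ and η_t = 2/(μ(t+γ)) for t ∈ ℕ. Let σ ≥ 0, G ≥ 0 and Γ ≥ 0 be reals, and let Δ, θ', d : ℕ → ℝ be sequences with Δ_t ≥ 0, 0 ≤ θ'_t ≤ 1 and d_t ≥ 0 for all t, satisfying for all t ≥ 0: Δ_{t+1} ≤ (1 − η_t μ)·Δ_t + η_t²·(σ² + 8(E−1)²G² + 8E²G²/K + 6L·Γ·θ'_t) + η_t·d_t. Then for every T ≥ 0, (L/2)·Δ_T ≤ (1/(T+γ))·(C₁'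 + C₂·θ_T·Γ) + ρ_T, where θ_T = (1/(T+γ−2))·∑_{i=0}^{T−1} θ'_i, ρ_T = (L/(μ(T+γ−2)))·∑_{i=0}^{T−1} d_i, C₁' = (2L/μ²)·(σ² + 8(E−1)²G² + 8E²G²/K) + (4L²/μ)·Δ_0, and C₂ = 12L²/μ². -/
set_option maxHeartbeats 1600000


/-- Deterministic reduction underlying Theorem A.2 (convergence of FedALIGN under partial
participation of `K` sampled priority clients and arbitrary participation of non-priority
clients). -/
theorem stmt_13 (μ L : ℝ) (hμ : 0 < μ) (hμL : μ ≤ L)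
    (E K : ℕ) (hE : 1 ≤ E) (hK : 1 ≤ K) (hEγ : (E : ℝ) ≤ 8 * L / μ)
    (γ : ℝ) (hγ : γ = 8 * L / μ)
    (η : ℕ → ℝ) (hη : ∀ t : ℕ, η t = 2 / (μ * (t + γ)))
    (σ G Γ : ℝ) (hσ : 0 ≤ σ) (hG : 0 ≤ G) (hΓ : 0 ≤ Γ)
    (Δ θ' d : ℕ → ℝ) (hΔ : ∀ t, 0 ≤ Δ t)
    (hθ0 : ∀ t, 0 ≤ θ' t) (hθ1 : ∀ t, θ' t ≤ 1) (hd : ∀ t, 0 ≤ d t)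
    (hrec : ∀ t : ℕ, Δ (t + 1) ≤ (1 - η t * μ) * Δ t
      + η t ^ 2 * (σ ^ 2 + 8 * ((E : ℝ) - 1) ^ 2 * G ^ 2 + 8 * (E : ℝ) ^ 2 * G ^ 2 / K
        + 6 * L * Γ * θ' t) + η t * d t) :
    ∀ T : ℕ, (L / 2) * Δ T ≤
      (1 / (T + γ)) *
        ((2 * L / μ ^ 2) * (σ ^ 2 + 8 * ((E : ℝ) - 1) ^ 2 * G ^ 2
            + 8 * (E : ℝ) ^ 2 * G ^ 2 / K) + (4 * L ^ 2 / μ) * Δ 0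
          + (12 * L ^ 2 / μ ^ 2) * ((1 / (T + γ - 2)) * ∑ i ∈ Finset.range T, θ' i) * Γ)
      + (L / (μ * (T + γ - 2))) * ∑ i ∈ Finset.range T, d i := by
  have hL : 0 < L := lt_of_lt_of_le hμ hμL
  have hμ' : μ ≠ 0 := ne_of_gt hμ
  have hγ8 : (8 : ℝ) ≤ γ := by
    rw [hγ, le_div_iff₀ hμ]; nlinarith
  have hγμ : γ * μ = 8 * L := by
    rw [hγ]; field_simp
  set B : ℝ := σ ^ 2 + 8 * ((E : ℝ) - 1) ^ 2 * G ^ 2 + 8 * (E : ℝ) ^ 2 * G ^ 2 / K with hBdef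
  clear_value B
  have hB0 : 0 ≤ B := by
    rw [hBdef]; positivity
  have hC0 : 0 ≤ 6 * L * Γ := by positivity
  -- Key unrolled recursion
  have key : ∀ T : ℕ, ((T : ℝ) + γ - 2) * ((T : ℝ) + γ - 1) * Δ T ≤
      (γ - 2) * (γ - 1) * Δ 0 + ∑ i ∈ Finset.range T,
        (4 / μ ^ 2 * (B + 6 * L * Γ * θ' i) * (((i : ℝ) + γ - 1) / ((i : ℝ) + γ))
          + 2 / μ * ((i : ℝ) + γ - 1) * d i) := by
    intro T
    induction T with
    | zero => simp
    | succ t ih =>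
      have ht0 : (0 : ℝ) ≤ (t : ℝ) := Nat.cast_nonneg t
      have hy : (0 : ℝ) < (t : ℝ) + γ := by linarith
      have hy' : ((t : ℝ) + γ) ≠ 0 := ne_of_gt hy
      have h1 := hrec t
      rw [hη t] at h1
      have hnn : (0 : ℝ) ≤ ((t : ℝ) + γ - 1) * ((t : ℝ) + γ) := by nlinarith
      have key_step : ((t : ℝ) + γ - 1) * ((t : ℝ) + γ) * Δ (t + 1) ≤
          ((t : ℝ) + γ - 2) * ((t : ℝ) + γ - 1) * Δ t
            + (4 / μ ^ 2 * (B + 6 * L * Γ * θ' t) * (((t : ℝ) + γ - 1) / ((t : ℝ) + γ))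
              + 2 / μ * ((t : ℝ) + γ - 1) * d t) := by
        refine le_trans (mul_le_mul_of_nonneg_left h1 hnn) (le_of_eq ?_)
        field_simp
        ring
      rw [Finset.sum_range_succ]
      push_cast
      have eL : ((t : ℝ) + 1 + γ - 2) * ((t : ℝ) + 1 + γ - 1) * Δ (t + 1)
          = ((t : ℝ) + γ - 1) * ((t : ℝ) + γ) * Δ (t + 1) := by ring
      linarith [key_step, ih, eL]
  intro T
  set X : ℝ := (T : ℝ) + γ with hXdef
  have hT0 : (0 : ℝ) ≤ (T : ℝ) := Nat.cast_nonneg T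
  have hX8 : (8 : ℝ) ≤ X := by rw [hXdef]; linarith
  have hXγ : γ ≤ X := by rw [hXdef]; linarith
  have hXpos : (0 : ℝ) < X := by linarith
  have hX2 : (0 : ℝ) < X - 2 := by linarith
  have hX1 : (0 : ℝ) < X - 1 := by linarith
  have hX2' : X - 2 ≠ 0 := ne_of_gt hX2
  have hX1' : X - 1 ≠ 0 := ne_of_gt hX1
  have hX' : X ≠ 0 := ne_of_gt hXpos
  set Sθ : ℝ := ∑ i ∈ Finset.range T, θ' i with hSθdef
  set Sd : ℝ := ∑ i ∈ Finset.range T, d i with hSddef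
  clear_value X Sθ Sd
  have hSθ0 : 0 ≤ Sθ := by
    rw [hSθdef]; exact Finset.sum_nonneg fun i _ => hθ0 i
  have hSd0 : 0 ≤ Sd := by
    rw [hSddef]; exact Finset.sum_nonneg fun i _ => hd i
  have hkey := key T
  rw [← hXdef] at hkey
  -- bound the sum termwise
  have hsum : ∑ i ∈ Finset.range T,
      (4 / μ ^ 2 * (B + 6 * L * Γ * θ' i) * (((i : ℝ) + γ - 1) / ((i : ℝ) + γ))
        + 2 / μ * ((i : ℝ) + γ - 1) * d i)
      ≤ ∑ i ∈ Finset.range T,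
      (4 * B / μ ^ 2 + 24 * L * Γ / μ ^ 2 * ((X - 1) / X) * θ' i + 2 * (X - 1) / μ * d i) := by
    apply Finset.sum_le_sum
    intro i hi
    have hiT : (i : ℝ) + 1 ≤ (T : ℝ) := by exact_mod_cast Finset.mem_range.mp hi
    have hi0 : (0 : ℝ) ≤ (i : ℝ) := Nat.cast_nonneg i
    have hy0 : (0 : ℝ) < (i : ℝ) + γ := by linarith
    have hyX : (i : ℝ) + γ ≤ X - 1 := by rw [hXdef]; linarith
    have hr1 : ((i : ℝ) + γ - 1) / ((i : ℝ) + γ) ≤ 1 := by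
      rw [div_le_one hy0]; linarith
    have hr0 : 0 ≤ ((i : ℝ) + γ - 1) / ((i : ℝ) + γ) := by
      apply div_nonneg <;> linarith
    have hr2 : ((i : ℝ) + γ - 1) / ((i : ℝ) + γ) ≤ (X - 1) / X := by
      rw [div_le_div_iff₀ hy0 hXpos]; linarith
    have c1 : (0 : ℝ) ≤ 4 * B / μ ^ 2 := by positivity
    have c2 : (0 : ℝ) ≤ 24 * L * Γ / μ ^ 2 * θ' i := by
      apply mul_nonneg (by positivity) (hθ0 i)
    have c3 : (0 : ℝ) ≤ 2 / μ := by positivity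
    have h3 : 2 / μ * (((i : ℝ) + γ - 1) * d i) ≤ 2 / μ * ((X - 1) * d i) :=
      mul_le_mul_of_nonneg_left
        (mul_le_mul_of_nonneg_right (by linarith) (hd i)) c3
    have ha := mul_le_mul_of_nonneg_left hr1 c1
    have hb := mul_le_mul_of_nonneg_left hr2 c2
    have e : 4 / μ ^ 2 * (B + 6 * L * Γ * θ' i) * (((i : ℝ) + γ - 1) / ((i : ℝ) + γ))
          + 2 / μ * ((i : ℝ) + γ - 1) * d i
        = 4 * B / μ ^ 2 * (((i : ℝ) + γ - 1) / ((i : ℝ) + γ))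
          + 24 * L * Γ / μ ^ 2 * θ' i * (((i : ℝ) + γ - 1) / ((i : ℝ) + γ))
          + 2 / μ * (((i : ℝ) + γ - 1) * d i) := by ring
    rw [e]
    refine add_le_add (add_le_add ?_ ?_) ?_
    · exact le_trans ha (le_of_eq (mul_one _))
    · exact le_trans hb (le_of_eq (by ring))
    · exact le_trans h3 (le_of_eq (by ring))
  have hsum2 : ∑ i ∈ Finset.range T,
      (4 * B / μ ^ 2 + 24 * L * Γ / μ ^ 2 * ((X - 1) / X) * θ' i + 2 * (X - 1) / μ * d i)
      = (T : ℝ) * (4 * B / μ ^ 2) + 24 * L * Γ / μ ^ 2 * ((X - 1) / X) * Sθ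
        + 2 * (X - 1) / μ * Sd := by
    rw [hSθdef, hSddef, Finset.sum_add_distrib, Finset.sum_add_distrib, Finset.sum_const,
      ← Finset.mul_sum, ← Finset.mul_sum]
    simp [nsmul_eq_mul]
  have main : (X - 2) * (X - 1) * Δ T ≤
      (γ - 2) * (γ - 1) * Δ 0 + ((T : ℝ) * (4 * B / μ ^ 2)
        + 24 * L * Γ / μ ^ 2 * ((X - 1) / X) * Sθ + 2 * (X - 1) / μ * Sd) := by
    linarith [hkey, hsum.trans_eq hsum2]
  clear hrec key hkey hsum hsum2 hη hEγ hθ0 hθ1 hd hσ hG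
  have hTX : (T : ℝ) * X ≤ (X - 2) * (X - 1) := by
    have hTXeq : (T : ℝ) * X = X ^ 2 - γ * X := by rw [hXdef]; ring
    have h38 : 3 * X ≤ γ * X :=
      mul_le_mul_of_nonneg_right (by linarith) hXpos.le
    nlinarith [hTXeq, h38]
  have hΔ0 := hΔ 0
  have hT1 : (L / (2 * (X - 2) * (X - 1))) * ((γ - 2) * (γ - 1) * Δ 0)
      ≤ (1 / X) * (4 * L ^ 2 / μ * Δ 0) := by
    rw [div_mul_eq_mul_div, one_div_mul_eq_div,
      div_le_div_iff₀ (by positivity) hXpos]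
    have hpoly : (γ - 2) * (γ - 1) * X ≤ γ * ((X - 2) * (X - 1)) := by
      nlinarith [mul_nonneg (sub_nonneg.2 hXγ) (show (0 : ℝ) ≤ γ * X - 2 by nlinarith)]
    have hint1 := mul_le_mul_of_nonneg_left hpoly
      (show (0 : ℝ) ≤ L * Δ 0 from mul_nonneg hL.le hΔ0)
    have hsub : 4 * L ^ 2 / μ * Δ 0 * (2 * (X - 2) * (X - 1))
        = L * Δ 0 * (γ * ((X - 2) * (X - 1))) := by rw [hγ]; ring
    linarith [hint1, hsub]
  have hT2 : (L / (2 * (X - 2) * (X - 1))) * ((T : ℝ) * (4 * B / μ ^ 2))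
      ≤ (1 / X) * (2 * L / μ ^ 2 * B) := by
    rw [div_mul_eq_mul_div, one_div_mul_eq_div,
      div_le_div_iff₀ (by positivity) hXpos]
    have hint := mul_le_mul_of_nonneg_left hTX
      (show (0 : ℝ) ≤ 4 * L * (B / μ ^ 2) from
        mul_nonneg (by positivity) (div_nonneg hB0 (sq_nonneg μ)))
    ring_nf at hint ⊢
    linarith [hint]
  have hT3 : (L / (2 * (X - 2) * (X - 1))) * (24 * L * Γ / μ ^ 2 * ((X - 1) / X) * Sθ)
      ≤ (1 / X) * (12 * L ^ 2 / μ ^ 2 * ((1 / (X - 2)) * Sθ) * Γ) := by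
    apply le_of_eq
    field_simp
    ring
  have hT4 : (L / (2 * (X - 2) * (X - 1))) * (2 * (X - 1) / μ * Sd)
      ≤ (L / (μ * (X - 2))) * Sd := by
    apply le_of_eq
    field_simp
  calc (L / 2) * Δ T
      = (L / (2 * (X - 2) * (X - 1))) * ((X - 2) * (X - 1) * Δ T) := by
        field_simp
    _ ≤ (L / (2 * (X - 2) * (X - 1))) * ((γ - 2) * (γ - 1) * Δ 0
          + ((T : ℝ) * (4 * B / μ ^ 2) + 24 * L * Γ / μ ^ 2 * ((X - 1) / X) * Sθ
            + 2 * (X - 1) / μ * Sd)) := by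
        apply mul_le_mul_of_nonneg_left main (by positivity)
    _ = (L / (2 * (X - 2) * (X - 1))) * ((γ - 2) * (γ - 1) * Δ 0)
          + (L / (2 * (X - 2) * (X - 1))) * ((T : ℝ) * (4 * B / μ ^ 2))
          + (L / (2 * (X - 2) * (X - 1))) * (24 * L * Γ / μ ^ 2 * ((X - 1) / X) * Sθ)
          + (L / (2 * (X - 2) * (X - 1))) * (2 * (X - 1) / μ * Sd) := by ring
    _ ≤ (1 / X) * (4 * L ^ 2 / μ * Δ 0) + (1 / X) * (2 * L / μ ^ 2 * B)
          + (1 / X) * (12 * L ^ 2 / μ ^ 2 * ((1 / (X - 2)) * Sθ) * Γ)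
          + (L / (μ * (X - 2))) * Sd := by
        exact add_le_add (add_le_add (add_le_add hT1 hT2) hT3) hT4
    _ = (1 / X) * (2 * L / μ ^ 2 * B + 4 * L ^ 2 / μ * Δ 0
          + 12 * L ^ 2 / μ ^ 2 * ((1 / (X - 2)) * Sθ) * Γ)
          + (L / (μ * (X - 2))) * Sd := by ring
end
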